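/- For every polynomial f in Poly⁺ (zero constant term), the finitely supported sum Σ_{i≥1} Z(x_i·R_i(∂_i f)) equals f; that is, the operators Z∘x_i∘R_i are creation operators for the divided differences ∂_i. -/

import Mathlib

/-
Conventions: `Pol = MvPolynomial ℕ ℤ` with the Lean variable `X i` representing
the paper's variable `x_{i+1}` (0-indexed).  All operators carrying a paper index
`i ≥ 1` are represented by Lean operators indexed by `i : ℕ` (Lean `i` ↔ paper `i+1`),
and sequences of positive integers are represented by sequences of natural numbers
(entry `v` ↔ paper entry `v+1`).
-/

open MvPolynomial
open scoped Classical

abbrev Pol := MvPolynomial ℕ ℤ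

noncomputable section

/-- Interchange the variables `x_{i+1}` and `x_{i+2}` (paper indexing). -/
def swapVar (i : ℕ) (f : Pol) : Pol := rename (Equiv.swap i (i+1)) f

/-- Exact division: the unique `g` with `d * g = f` when it exists (`0` otherwise). -/
def exactDiv (d f : Pol) : Pol := if h : ∃ g : Pol, d * g = f then h.choose else 0

/-- The divided difference operator `∂_{i+1}` (paper indexing). -/
def ddiff (i : ℕ) (f : Pol) : Pol := exactDiv (X i - X (i+1)) (f - swapVar i f)

/-- The Bergeron–Sottile operator `R_{i+1}` (paper indexing): `x_j ↦ x_j` for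
`j < i+1`, `x_{i+1} ↦ 0`, `x_j ↦ x_{j-1}` for `j > i+1`. -/
def BS (i : ℕ) : Pol →ₐ[ℤ] Pol :=
  aeval fun j => if j < i then X j else if j = i then 0 else X (j-1)

/-- `m`-fold iterate of `BS i`. -/
def BSit (i m : ℕ) (f : Pol) : Pol := (fun g => BS i g)^[m] f

/-- `Z g = Σ_{k ≥ 0} R₁ᵏ g`. -/
def Zop (f : Pol) : Pol := ∑ᶠ k : ℕ, BSit 0 k f

/-- `Z^{(m)} g = Σ_{k ≥ 0} R₁^{km} g`. -/
def Zm (m : ℕ) (f : Pol) : Pol := ∑ᶠ k : ℕ, BSit 0 (k * m) f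

/-- The truncation operator keeping the first `n` variables: `Π_n` in paper indexing. -/
def truncOp (n : ℕ) : Pol →ₐ[ℤ] Pol := aeval fun j => if j < n then X j else 0

/-- The quasisymmetric divided difference `T_{i+1}` defined as the exact quotient
`((R_{i+2} - R_{i+1})f)/x_{i+1}` (paper indexing). -/
def TqDiv (i : ℕ) (f : Pol) : Pol := exactDiv (X i) (BS (i+1) f - BS i f)

/-- The quasisymmetric divided difference `T_{i+1} = R_{i+1} ∘ ∂_{i+1}` (paper indexing). -/
def Tq (i : ℕ) (f : Pol) : Pol := BS i (ddiff i f)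

/-- The `m`-quasisymmetric divided difference `T^{(m)}_{i+1}` (paper indexing). -/
def Tm (m i : ℕ) (f : Pol) : Pol := exactDiv (X i) (BSit (i+1) m f - BSit i m f)

/-- The slide extractor `D_{i+1} = Π_{i+1} ∘ ∂_{i+1}` (paper indexing). -/
def Dop (i : ℕ) (f : Pol) : Pol := truncOp (i+1) (ddiff i f)

/-- The `m`-slide extractor `D^{(m)}_{i+1} = Π_{i+1} ∘ T^{(m)}_{i+1}` (paper indexing). -/
def Dm (m i : ℕ) (f : Pol) : Pol := truncOp (i+1) (Tm m i f)

/-- The slide creator `B_{i+1} f = Σ_{k=1}^{i+1} x_k · R_k^{i+1-k}(Π_{i+1} f)` (paper indexing). -/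
def Bop (i : ℕ) (f : Pol) : Pol :=
  ∑ k ∈ Finset.range (i+1), X k * BSit k (i - k) (truncOp (i+1) f)

/-- The creation operator `Z ∘ x_{i+1} ∘ R_{i+1}` (paper indexing). -/
def crea (i : ℕ) (f : Pol) : Pol := Zop (X i * BS i f)

/-- A permutation of `{0,1,2,…}` is finitely supported if it fixes all but
finitely many points. -/
def FinSupp (w : Equiv.Perm ℕ) : Prop := Set.Finite {x | w x ≠ x}

/-- Coxeter length: the minimal `k` such that `w` is a product of `k` simple
transpositions. -/
def len (w : Equiv.Perm ℕ) : ℕ :=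
  sInf {k | ∃ l : List ℕ, l.length = k ∧ (l.map fun i => Equiv.swap i (i+1)).prod = w}

/-- The set of reduced words for `w`. -/
def Red (w : Equiv.Perm ℕ) : Set (List ℕ) :=
  {l | l.length = len w ∧ (l.map fun i => Equiv.swap i (i+1)).prod = w}

/-- A family of polynomials indexed by permutations is a family of Schubert
polynomials if: each member is homogeneous of degree the length, the identity is
sent to `1`, and divided differences act as expected (all this for finitely
supported permutations). -/
def IsSchubertFamily (S : Equiv.Perm ℕ → Pol) : Prop :=
  (∀ w, FinSupp w → (S w).IsHomogeneous (len w)) ∧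
  S 1 = 1 ∧
  ∀ w, FinSupp w → ∀ i : ℕ,
    ddiff i (S w) = if w (i+1) < w i then S (w * Equiv.swap i (i+1)) else 0

/-- `b` is a compatible sequence for `a`. -/
def Compat {k : ℕ} (a b : Fin k → ℕ) : Prop :=
  Monotone b ∧ (∀ j, b j ≤ a j) ∧
  ∀ (j : ℕ) (h : j + 1 < k),
    a ⟨j, Nat.lt_of_succ_lt h⟩ < a ⟨j+1, h⟩ → b ⟨j, Nat.lt_of_succ_lt h⟩ < b ⟨j+1, h⟩

/-- The slide polynomial `𝔉_a`, as the sum of the monomials of all compatible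
sequences for `a`. -/
def slide {k : ℕ} (a : Fin k → ℕ) : Pol :=
  ∑ᶠ b ∈ {b : Fin k → ℕ | Compat a b}, ∏ j, X (b j)

/-- `b` is an `m`-compatible sequence for `a` (entrywise congruent mod `m`). -/
def MCompat (m : ℕ) {k : ℕ} (a b : Fin k → ℕ) : Prop :=
  Monotone b ∧ (∀ j, b j ≤ a j ∧ b j % m = a j % m) ∧
  ∀ (j : ℕ) (h : j + 1 < k),
    a ⟨j, Nat.lt_of_succ_lt h⟩ < a ⟨j+1, h⟩ → b ⟨j, Nat.lt_of_succ_lt h⟩ < b ⟨j+1, h⟩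

/-- The `m`-slide polynomial `𝔉ᵐ_a`. -/
def mslide (m : ℕ) {k : ℕ} (a : Fin k → ℕ) : Pol :=
  ∑ᶠ b ∈ {b : Fin k → ℕ | MCompat m a b}, ∏ j, X (b j)

/-- Value of the `m`-slide creator `B^{(m)}_{a+1}` (paper indexing) on the monomial with
exponent vector `d`. -/
def BmMono (m a : ℕ) (d : ℕ →₀ ℕ) : Pol :=
  if ∃ t, a < t ∧ d t ≠ 0 then 0
  else monomial (d.erase a) 1 *
    ∑ r ∈ Finset.range (a+1),
      if r * m ≤ a ∧ ∀ t, t < a → d t ≠ 0 → t < a - r * m then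
        X (a - r * m) ^ (d a + 1) else 0

/-- The `m`-slide creator `B^{(m)}_{a+1}` (paper indexing), extended linearly from
its values on monomials. -/
def Bm (m a : ℕ) (f : Pol) : Pol := ∑ d ∈ f.support, C (f.coeff d) * BmMono m a d

end

/-!
Applying `R_i` to `(x_i - x_{i+1}) ∂_i f = f - s_i f` and using `R_i x_i = 0`, `R_i x_{i+1} = x_i`
and `R_i ∘ s_i = R_{i+1}` gives `x_i R_i ∂_i f = R_{i+1} f - R_i f`. Since `R_i f = f` once `i`
exceeds the variables of `f`, the sum over `i` telescopes to `Z (f - R₁ f)`, and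
`Z (f - R₁ f) = f` telescopes again because `R₁ᵏ f = 0` for large `k`.
-/

lemma mul_exactDiv_of_dvd {d f : Pol} (h : d ∣ f) : d * exactDiv d f = f := by
  obtain ⟨g, rfl⟩ := h
  have h' : ∃ g' : Pol, d * g' = d * g := ⟨g, rfl⟩
  rw [exactDiv, dif_pos h']
  exact h'.choose_spec

lemma MvPolynomial.X_sub_X_dvd_sub_rename_swap {σ R : Type*} [CommRing R] [DecidableEq σ]
    (a b : σ) (p : MvPolynomial σ R) : X a - X b ∣ p - rename (Equiv.swap a b) p := by
  let I := Ideal.span {(X a - X b : MvPolynomial σ R)}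
  have hab : Ideal.Quotient.mk I (X a) = Ideal.Quotient.mk I (X b) :=
    Ideal.Quotient.eq.2 (Ideal.mem_span_singleton_self _)
  have hcomp :
      (Ideal.Quotient.mkₐ R I).comp (rename (Equiv.swap a b)) = Ideal.Quotient.mkₐ R I := by
    ext j
    simp only [AlgHom.comp_apply, rename_X, Ideal.Quotient.mkₐ_eq_mk, Equiv.swap_apply_def]
    split_ifs with hja hjb
    · rw [hja, hab]
    · rw [hjb, hab]
    · rfl
  rw [← Ideal.mem_span_singleton, ← Ideal.Quotient.eq]
  exact (congrArg (· p) hcomp).symm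

lemma mul_ddiff (i : ℕ) (f : Pol) : (X i - X (i+1)) * ddiff i f = f - swapVar i f :=
  mul_exactDiv_of_dvd (X_sub_X_dvd_sub_rename_swap i (i+1) f)

lemma BS_X (i j : ℕ) : BS i (X j) = if j < i then X j else if j = i then 0 else X (j-1) := by
  simp [BS]

lemma BS_swapVar (i : ℕ) (f : Pol) : BS i (swapVar i f) = BS (i+1) f := by
  suffices h : (BS i).comp (rename (Equiv.swap i (i+1))) = BS (i+1) from congrArg (· f) h
  refine algHom_ext fun j => ?_
  simp only [AlgHom.comp_apply, rename_X, BS_X, Equiv.swap_apply_def]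
  split_ifs <;> first | rfl | omega | (congr 1; omega)

lemma X_mul_BS_ddiff (i : ℕ) (f : Pol) : X i * BS i (ddiff i f) = BS (i+1) f - BS i f := by
  have h := congrArg (BS i) (mul_ddiff i f)
  simp only [map_mul, map_sub, BS_swapVar, BS_X, lt_irrefl, if_true, if_false,
    Nat.not_succ_lt_self, Nat.succ_ne_self, Nat.add_sub_cancel] at h
  linear_combination -h

lemma constantCoeff_BS (i : ℕ) (f : Pol) : constantCoeff (BS i f) = constantCoeff f := by
  suffices h : constantCoeff.comp (BS i).toRingHom = constantCoeff from RingHom.congr_fun h f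
  refine ringHom_ext (fun a => by simp) fun j => ?_
  simp only [RingHom.comp_apply, AlgHom.toRingHom_eq_coe, RingHom.coe_coe, BS_X]
  split_ifs <;> simp

lemma MvPolynomial.algHom_eqOn_supported {σ R A : Type*} [CommSemiring R] [Semiring A]
    [Algebra R A] {φ ψ : MvPolynomial σ R →ₐ[R] A} {s : Set σ}
    (h : ∀ j ∈ s, φ (X j) = ψ (X j)) : Set.EqOn φ ψ (supported R s) := by
  rw [supported_eq_adjoin_X]
  exact AlgHom.eqOn_adjoin_iff.2 (Set.forall_mem_image.2 h)

lemma MvPolynomial.exists_mem_supported_Iio {R : Type*} [CommSemiring R]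
    (p : MvPolynomial ℕ R) : ∃ n, p ∈ supported R (Set.Iio n) := by
  obtain ⟨n, hn⟩ := p.vars.exists_nat_subset_range
  exact ⟨n, mem_supported.2 (by rw [← Finset.coe_range]; exact Finset.coe_subset.2 hn)⟩

lemma BS_eq_self_of_mem_supported {n i : ℕ} {f : Pol} (hf : f ∈ supported ℤ (Set.Iio n))
    (hi : n ≤ i) : BS i f = f :=
  algHom_eqOn_supported (ψ := AlgHom.id ℤ Pol)
    (fun j hj => by rw [BS_X, if_pos (hj.trans_le hi)]; rfl) hf

lemma BSit_eq_pow (i m : ℕ) (f : Pol) : BSit i m f = (BS i ^ m) f := by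
  rw [AlgHom.coe_pow]; rfl

lemma pow_BS_zero_X (k j : ℕ) : (BS 0 ^ k) (X j) = if j < k then 0 else X (j - k) := by
  induction k with
  | zero => simp
  | succ k ih =>
    rw [pow_succ', AlgHom.mul_apply, ih]
    by_cases hjk : j < k
    · rw [if_pos hjk, if_pos (by omega), map_zero]
    rw [if_neg hjk, BS_X, if_neg (Nat.not_lt_zero _)]
    by_cases hj : j = k
    · rw [if_pos (by omega), if_pos (by omega)]
    · rw [if_neg (by omega), if_neg (by omega), Nat.sub_sub]

lemma exists_pow_BS_zero_eq_zero {g : Pol} (hg : constantCoeff g = 0) :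
    ∃ n, ∀ k, n ≤ k → (BS 0 ^ k) g = 0 := by
  obtain ⟨n, hn⟩ := exists_mem_supported_Iio g
  refine ⟨n, fun k hk => ?_⟩
  have h := algHom_eqOn_supported (φ := BS 0 ^ k) (ψ := aeval 0)
    (fun j hj => by rw [pow_BS_zero_X, if_pos (hj.trans_le hk), aeval_X, Pi.zero_apply]) hn
  rw [h, aeval_zero, hg, map_zero]

lemma Zop_eq_sum_range {g : Pol} {n : ℕ} (hn : ∀ k, n ≤ k → (BS 0 ^ k) g = 0) :
    Zop g = ∑ k ∈ Finset.range n, (BS 0 ^ k) g := by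
  simp only [Zop, BSit_eq_pow]
  refine finsum_eq_finsetSum_of_support_subset _ fun k hk => ?_
  by_contra hkn
  exact hk (hn k (by simpa using hkn))

lemma Zop_zero : Zop 0 = 0 := by
  simp [Zop, BSit_eq_pow]

lemma Zop_sub {g h : Pol} (hg : constantCoeff g = 0) (hh : constantCoeff h = 0) :
    Zop (g - h) = Zop g - Zop h := by
  obtain ⟨m, hm⟩ := exists_pow_BS_zero_eq_zero hg
  obtain ⟨n, hn⟩ := exists_pow_BS_zero_eq_zero hh
  have hgh : ∀ k, max m n ≤ k → (BS 0 ^ k) (g - h) = 0 := fun k hk => by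
    rw [map_sub, hm k (le_of_max_le_left hk), hn k (le_of_max_le_right hk), sub_zero]
  rw [Zop_eq_sum_range hgh, Zop_eq_sum_range (fun k hk => hm k (le_of_max_le_left hk)),
    Zop_eq_sum_range (fun k hk => hn k (le_of_max_le_right hk)), ← Finset.sum_sub_distrib]
  simp only [map_sub]

lemma Zop_sub_Zop_BS_zero {g : Pol} (hg : constantCoeff g = 0) : Zop g - Zop (BS 0 g) = g := by
  obtain ⟨n, hn⟩ := exists_pow_BS_zero_eq_zero hg
  have hshift (k : ℕ) : (BS 0 ^ k) (BS 0 g) = (BS 0 ^ (k + 1)) g := by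
    rw [pow_succ, AlgHom.mul_apply]
  have hn' (k : ℕ) (hk : n ≤ k) : (BS 0 ^ k) (BS 0 g) = 0 :=
    (hshift k).trans (hn (k + 1) (by omega))
  rw [Zop_eq_sum_range hn, Zop_eq_sum_range hn', ← Finset.sum_sub_distrib]
  simp only [hshift]
  rw [Finset.sum_range_sub', hn n le_rfl, sub_zero, pow_zero, AlgHom.one_apply]

/-- for every `f` with no constant term, the finitely supported sum
`Σ_{i≥1} Z(x_i·R_i(∂_i f))` equals `f`; the `Z∘x_i∘R_i` are creation operators for `∂_i`. -/
theorem stmt_1 (f : Pol) (hf : constantCoeff f = 0) :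
    {i : ℕ | Zop (X i * BS i (ddiff i f)) ≠ 0}.Finite ∧
    ∑ᶠ i : ℕ, Zop (X i * BS i (ddiff i f)) = f := by
  obtain ⟨N, hN⟩ := exists_mem_supported_Iio f
  have hBS (i : ℕ) : constantCoeff (BS i f) = 0 := (constantCoeff_BS i f).trans hf
  have hterm (i : ℕ) : Zop (X i * BS i (ddiff i f)) = Zop (BS (i+1) f) - Zop (BS i f) := by
    rw [X_mul_BS_ddiff, Zop_sub (hBS _) (hBS _)]
  have hsupp : (Function.support fun i => Zop (X i * BS i (ddiff i f))) ⊆ Set.Iio N := by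
    intro i hi
    by_contra hiN
    rw [Set.mem_Iio, not_lt] at hiN
    refine hi ?_
    dsimp only
    rw [X_mul_BS_ddiff, BS_eq_self_of_mem_supported hN (by omega),
      BS_eq_self_of_mem_supported hN hiN, sub_self, Zop_zero]
  refine ⟨(Set.finite_Iio N).subset hsupp, ?_⟩
  rw [finsum_eq_finsetSum_of_support_subset _ (by rwa [Finset.coe_range])]
  simp only [hterm]
  rw [Finset.sum_range_sub (fun i => Zop (BS i f)), BS_eq_self_of_mem_supported hN le_rfl,
    Zop_sub_Zop_BS_zero hf]
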